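/- Let R be an integral domain which is a ℚ-algebra, f ∈ R⟦X⟧ and a ∈ R. Then for every n ≥ 1: A_n(rescale a f) = a^{n−1} · rescale a (A_n(f)). Equivalently, at the level of flows, a·Φ_{rescale a f}(X,T) = Φ_f(aX, aT): multiplying the flow of f(aX) by a agrees with the flow of f with both the space variable and the time variable rescaled by a. -/

import Mathlib

open PowerSeries

/-- The autonomous polynomials of a power series: `A_1(f) = f` and
`A_{n+1}(f) = f·δ(A_n(f))`.  Here `autPolyPS f m` is `A_{m+1}(f)`. -/
noncomputable def autPolyPS {R : Type*} [CommRing R] (f : PowerSeries R) :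
    ℕ → PowerSeries R
  | 0 => f
  | m + 1 => f * derivativeFun (autPolyPS f m)

/-- The flow `Φ_f = X + ∑_{n≥1} A_n(f)·T^n/n!` of `f ∈ R⟦X⟧`, as a power series in the time
variable `T` with coefficients in `R⟦X⟧`. -/
noncomputable def flowPS {R : Type*} [CommRing R] [Algebra ℚ R] (f : PowerSeries R) :
    PowerSeries (PowerSeries R) :=
  PowerSeries.mk fun n => if n = 0 then PowerSeries.X
    else PowerSeries.C (R := R) (algebraMap ℚ R (1 / n.factorial)) * autPolyPS f (n - 1)


/-! The chain rule `δ(g(aX)) = a·(δg)(aX)` makes each of the `n - 1` derivatives in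
`A_n(f(aX))` contribute one factor `a`. Read coefficientwise, the flow identity is the same fact:
the extra factor `a` turns `a^(n-1)` into `a^n`, and in degree `0` it matches `rescale a X = aX`. -/

namespace PowerSeries

section CommSemiring

variable {R : Type*} [CommSemiring R]

theorem rescale_C (a r : R) : rescale a (C r) = C r := by
  ext n
  rcases n with _ | n <;> simp [coeff_rescale, coeff_C]

theorem derivative_rescale (a : R) (g : R⟦X⟧) :
    d⁄dX R (rescale a g) = C a * rescale a (d⁄dX R g) := by
  ext n
  simp only [coeff_derivative, coeff_rescale, coeff_C_mul]
  ring

end CommSemiring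

variable {R : Type*} [CommRing R]

theorem autPolyPS_succ (f : R⟦X⟧) (m : ℕ) :
    autPolyPS f (m + 1) = f * d⁄dX R (autPolyPS f m) :=
  rfl

theorem autPolyPS_rescale_eq (f : R⟦X⟧) (a : R) (m : ℕ) :
    autPolyPS (rescale a f) m = C a ^ m * rescale a (autPolyPS f m) := by
  induction m with
  | zero => simp [autPolyPS]
  | succ m ih =>
    have hδ : d⁄dX R (C a ^ m * rescale a (autPolyPS f m)) =
        C a ^ m * (C a * rescale a (d⁄dX R (autPolyPS f m))) := by
      rw [← map_pow, ← smul_eq_C_mul, ← smul_eq_C_mul, Derivation.map_smul, derivative_rescale]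
    rw [autPolyPS_succ, autPolyPS_succ, ih, hδ, map_mul]
    ring

theorem coeff_flowPS_zero [Algebra ℚ R] (f : R⟦X⟧) : coeff 0 (flowPS f) = X := by
  simp [flowPS]

theorem coeff_flowPS_of_ne_zero [Algebra ℚ R] (f : R⟦X⟧) {n : ℕ} (hn : n ≠ 0) :
    coeff n (flowPS f) = C (algebraMap ℚ R (1 / n.factorial)) * autPolyPS f (n - 1) := by
  simp [flowPS, hn]

end PowerSeries

theorem autPolyPS_rescale_general {R : Type*} [CommRing R] [Algebra ℚ R]
    (f : PowerSeries R) (a : R) :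
    (∀ n : ℕ, 1 ≤ n → autPolyPS (rescale a f) (n - 1) =
        PowerSeries.C (R := R) a ^ (n - 1) * rescale a (autPolyPS f (n - 1))) ∧
    (∀ n : ℕ, PowerSeries.C (R := R) a * PowerSeries.coeff (R := PowerSeries R) n (flowPS (rescale a f)) =
        PowerSeries.C (R := R) a ^ n * rescale a (PowerSeries.coeff (R := PowerSeries R) n (flowPS f))) := by
  refine ⟨fun n _ => autPolyPS_rescale_eq f a (n - 1), fun n => ?_⟩
  cases n with
  | zero => simp [coeff_flowPS_zero, rescale_X]
  | succ m =>
    rw [coeff_flowPS_of_ne_zero _ m.add_one_ne_zero, coeff_flowPS_of_ne_zero _ m.add_one_ne_zero,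
      map_mul, rescale_C, Nat.add_sub_cancel, autPolyPS_rescale_eq]
    ring

/-- For an integral domain `R` which is a `ℚ`-algebra, `f ∈ R⟦X⟧` and `a ∈ R`, one has
`A_n(rescale a f) = a^{n-1}·rescale a (A_n(f))` for every `n ≥ 1`; equivalently, at the level
of flows, `a·Φ_{rescale a f}(X,T) = Φ_f(aX,aT)` (coefficientwise in `T`: multiplying the `n`-th
coefficient of the flow of `f(aX)` by `a` agrees with `a^n` times the `n`-th coefficient of the
flow of `f` rescaled in the space variable by `a`). -/
theorem autPolyPS_rescale {R : Type*} [CommRing R] [IsDomain R] [Algebra ℚ R]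
    (f : PowerSeries R) (a : R) :
    (∀ n : ℕ, 1 ≤ n → autPolyPS (rescale a f) (n - 1) =
        PowerSeries.C (R := R) a ^ (n - 1) * rescale a (autPolyPS f (n - 1))) ∧
    (∀ n : ℕ, PowerSeries.C (R := R) a * PowerSeries.coeff (R := PowerSeries R) n (flowPS (rescale a f)) =
        PowerSeries.C (R := R) a ^ n * rescale a (PowerSeries.coeff (R := PowerSeries R) n (flowPS f))) :=
  autPolyPS_rescale_general f a
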